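/- Let G=(V,E) be a directed graph on V=[p] containing all self-loops, and let C be a diagonal positive definite p×p matrix. If there is no trek from i to j in G (i.e., there is no node t with a directed path from t to i and a directed path from t to j along edges of E), then Σ_{ij} = 0 for every matrix Σ ∈ M_{G,C}. -/

import Mathlib

open Matrix MeasureTheory

/-- A real square matrix is *stable* if every eigenvalue (over `ℂ`) has strictly
negative real part. -/
def IsStableMat {n : Type*} [Fintype n] [DecidableEq n] (M : Matrix n n ℝ) : Prop :=
  ∀ μ ∈ spectrum ℂ (M.map (algebraMap ℝ ℂ)), μ.re < 0

/-- `M ∈ ℝ^E`: the matrix `M` is supported on the directed graph with edge set `E`,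
i.e. `M j i = 0` whenever `(i, j) ∉ E`. -/
def InSupp {n : Type*} (E : Set (n × n)) (M : Matrix n n ℝ) : Prop :=
  ∀ i j : n, (i, j) ∉ E → M j i = 0

/-- The graphical continuous Lyapunov model `M_{G,C}`: positive definite matrices `S`
such that `M * S + S * Mᵀ + C = 0` for some `M ∈ ℝ^E`. -/
def LyapModel {n : Type*} [Fintype n] [DecidableEq n] (E : Set (n × n))
    (C : Matrix n n ℝ) : Set (Matrix n n ℝ) :=
  {S | S.PosDef ∧ ∃ M : Matrix n n ℝ, InSupp E M ∧ M * S + S * Mᵀ + C = 0}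

/-- Global identifiability: no two stable matrices supported on `E` yield the same
solution of the Lyapunov equation.  (Since for stable `M` the Lyapunov equation has a
unique positive definite solution `Σ(M,C)`, this is equivalent to every fiber
`F_{G,C}(M₀)` being the singleton `{M₀}`.) -/
def GloballyIdentifiable {n : Type*} [Fintype n] [DecidableEq n] (E : Set (n × n))
    (C : Matrix n n ℝ) : Prop :=
  ∀ M₁ M₂ : Matrix n n ℝ,
    InSupp E M₁ → IsStableMat M₁ → InSupp E M₂ → IsStableMat M₂ →
    ∀ S : Matrix n n ℝ, S.PosDef →
      M₁ * S + S * M₁ᵀ + C = 0 → M₂ * S + S * M₂ᵀ + C = 0 → M₁ = M₂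

/-- A directed graph is *simple* if it has no 2-cycles between distinct nodes. -/
def IsSimpleDigraph {n : Type*} (E : Set (n × n)) : Prop :=
  ∀ i j : n, i ≠ j → (i, j) ∈ E → (j, i) ∉ E

/-- The fiber `F_{G,C}(M₀)`: all stable matrices supported on `E` whose Lyapunov
solution coincides with that of `M₀`, i.e. some positive definite `S` solves the
Lyapunov equation for both `M₀` and `M`. -/
def Fiber {n : Type*} [Fintype n] [DecidableEq n] (E : Set (n × n))
    (C M₀ : Matrix n n ℝ) : Set (Matrix n n ℝ) :=
  {M | InSupp E M ∧ IsStableMat M ∧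
    ∃ S : Matrix n n ℝ, S.PosDef ∧ M₀ * S + S * M₀ᵀ + C = 0 ∧ M * S + S * Mᵀ + C = 0}

/-- The identification of the coordinate space `ℝ^{|E|}` with the matrices in `ℝ^E`:
the coordinate attached to an edge `(i,j)` is the entry `M j i`. -/
def edgeMatrix {p : ℕ} (E : Finset (Fin p × Fin p)) (f : E → ℝ) :
    Matrix (Fin p) (Fin p) ℝ :=
  fun j i => if h : (i, j) ∈ E then f ⟨(i, j), h⟩ else 0

/-- Generic identifiability: the set of parameter vectors `f ∈ ℝ^{|E|}` whose matrix
is stable but whose fiber is not a singleton is a Lebesgue null set. -/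
def GenericallyIdentifiable {p : ℕ} (E : Finset (Fin p × Fin p))
    (C : Matrix (Fin p) (Fin p) ℝ) : Prop :=
  volume {f : E → ℝ | IsStableMat (edgeMatrix E f) ∧
    Fiber (E : Set (Fin p × Fin p)) C (edgeMatrix E f) ≠ {edgeMatrix E f}} = 0

/-!
Let `A` and `B` be the sets of ancestors of `i` and `j`; without a trek they are disjoint. Since
`M ∈ ℝ^E`, a row of `M` indexed by an ancestral set vanishes outside that set, so the blocks of
`MΣ + ΣMᵀ + C = 0` give `M_AA Σ_AA + Σ_AA M_AAᵀ + C_AA = 0`, the same for `B`, and (as `C` is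
diagonal) the Sylvester equation `M_AA Σ_AB + Σ_AB M_BBᵀ = 0`.

Its only solution is `0`. In block form it says that the symmetric matrix `Δ = [0, X; Xᵀ, 0]`
solves `NΔ + ΔNᵀ = 0`, where `NT + TNᵀ + D = 0` with `T, D` positive definite. Let `c` be the
least number with `Δ - cT ⪰ 0` and `v ≠ 0` a kernel vector of `Δ - cT`. Then
`N(Δ - cT) + (Δ - cT)Nᵀ = cD`, and evaluating the quadratic form at `v` gives `c vᵀDv = 0`, so
`c = 0` and `Δ ⪰ 0`. The same for `-Δ` gives `Δ = 0`.
-/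

namespace Matrix

section Lyapunov

variable {n : Type*} [Fintype n]

theorem PosDef.exists_posSemidef_sub_smul_mulVec_eq_zero [Nonempty n] {T Δ : Matrix n n ℝ}
    (hT : T.PosDef) (hΔ : Δ.IsHermitian) :
    ∃ (c : ℝ) (v : n → ℝ), v ≠ 0 ∧ (Δ - c • T).PosSemidef ∧ (Δ - c • T) *ᵥ v = 0 := by
  set q : (n → ℝ) → ℝ := fun v => (v ⬝ᵥ Δ *ᵥ v) / (v ⬝ᵥ T *ᵥ v)
  have hT_pos : ∀ v ≠ 0, 0 < v ⬝ᵥ T *ᵥ v := fun v hv => by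
    simpa using hT.dotProduct_mulVec_pos hv
  have hq_smul : ∀ (a : ℝ) (v : n → ℝ), a ≠ 0 → q (a • v) = q v := fun a v ha => by
    simp only [q, mulVec_smul, dotProduct_smul, smul_dotProduct, smul_eq_mul, ← mul_assoc]
    exact mul_div_mul_left _ _ (mul_ne_zero ha ha)
  have hq_cont : ContinuousOn q (Metric.sphere 0 1) := by
    refine ContinuousOn.div (by fun_prop) (by fun_prop) fun v hv => (hT_pos v ?_).ne'
    exact ne_zero_of_mem_unit_sphere (⟨v, hv⟩ : Metric.sphere (0 : n → ℝ) 1)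
  obtain ⟨v, hv, hv_min⟩ := (isCompact_sphere (0 : n → ℝ) 1).exists_isMinOn
    (NormedSpace.sphere_nonempty.2 zero_le_one) hq_cont
  have hv0 : v ≠ 0 := ne_zero_of_mem_unit_sphere ⟨v, hv⟩
  have hq_min : ∀ w ≠ 0, q v ≤ q w := fun w hw => by
    rw [← hq_smul ‖w‖⁻¹ w (by simpa using hw)]
    exact hv_min (by simp [norm_smul, hw])
  have hpsd : (Δ - q v • T).PosSemidef := by
    refine .of_dotProduct_mulVec_nonneg (hΔ.sub (hT.1.smul (IsSelfAdjoint.all _))) fun w => ?_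
    rw [star_trivial, sub_mulVec, smul_mulVec, dotProduct_sub, dotProduct_smul, smul_eq_mul,
      sub_nonneg]
    rcases eq_or_ne w 0 with rfl | hw
    · simp
    · exact (le_div_iff₀ (hT_pos w hw)).1 (hq_min w hw)
  refine ⟨q v, v, hv0, hpsd, (hpsd.dotProduct_mulVec_zero_iff v).1 ?_⟩
  rw [star_trivial, sub_mulVec, smul_mulVec, dotProduct_sub, dotProduct_smul, smul_eq_mul,
    div_mul_cancel₀ _ (hT_pos v hv0).ne', sub_self]

theorem posSemidef_of_lyapunov {N T D Δ : Matrix n n ℝ} (hT : T.PosDef) (hD : D.PosDef)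
    (hNT : N * T + T * Nᵀ + D = 0) (hΔ : Δ.IsHermitian) (hNΔ : N * Δ + Δ * Nᵀ = 0) :
    Δ.PosSemidef := by
  cases isEmpty_or_nonempty n
  · rw [Subsingleton.elim Δ 0]
    exact .zero
  obtain ⟨c, v, hv, hpsd, hker⟩ := hT.exists_posSemidef_sub_smul_mulVec_eq_zero hΔ
  suffices c = 0 by simpa [this] using hpsd
  have hsymm : (Δ - c • T)ᵀ = Δ - c • T := by
    rw [← conjTranspose_eq_transpose_of_trivial]
    exact hpsd.1
  have hlyap : N * (Δ - c • T) + (Δ - c • T) * Nᵀ = c • D :=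
    calc N * (Δ - c • T) + (Δ - c • T) * Nᵀ
        = (N * Δ + Δ * Nᵀ) - c • (N * T + T * Nᵀ + D) + c • D := by
          rw [mul_sub, sub_mul, Matrix.mul_smul, Matrix.smul_mul]; module
      _ = c • D := by rw [hNΔ, hNT, smul_zero, sub_zero, zero_add]
  have hquad : v ⬝ᵥ (N * (Δ - c • T) + (Δ - c • T) * Nᵀ) *ᵥ v = 0 := by
    rw [add_mulVec, dotProduct_add, ← mulVec_mulVec, ← mulVec_mulVec, hker, mulVec_zero,
      dotProduct_zero, zero_add, dotProduct_mulVec, ← mulVec_transpose, hsymm, hker,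
      zero_dotProduct]
  rw [hlyap, smul_mulVec, dotProduct_smul, smul_eq_mul] at hquad
  exact (mul_eq_zero.1 hquad).resolve_right (by simpa using (hD.dotProduct_mulVec_pos hv).ne')

theorem eq_zero_of_lyapunov {N T D Δ : Matrix n n ℝ} (hT : T.PosDef) (hD : D.PosDef)
    (hNT : N * T + T * Nᵀ + D = 0) (hΔ : Δ.IsHermitian) (hNΔ : N * Δ + Δ * Nᵀ = 0) :
    Δ = 0 := by
  classical
  have hpos := posSemidef_of_lyapunov hT hD hNT hΔ hNΔ
  have hneg := posSemidef_of_lyapunov hT hD hNT hΔ.neg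
    (by rw [mul_neg, neg_mul, ← neg_add, hNΔ, neg_zero])
  have hker : ∀ v, Δ *ᵥ v = 0 := fun v => by
    refine (hpos.dotProduct_mulVec_zero_iff v).1 (le_antisymm ?_ (hpos.dotProduct_mulVec_nonneg v))
    simpa [neg_mulVec] using hneg.dotProduct_mulVec_nonneg v
  ext i j
  simpa using congrFun (hker (Pi.single j 1)) i

theorem PosDef.fromBlocks_zero {m : Type*} [Fintype m] {A : Matrix m m ℝ} {D : Matrix n n ℝ}
    (hA : A.PosDef) (hD : D.PosDef) : (fromBlocks A 0 0 D).PosDef := by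
  refine .of_dotProduct_mulVec_pos (hA.1.fromBlocks (by simp) hD.1) fun v hv => ?_
  obtain ⟨x, y, rfl⟩ : ∃ x y, v = Sum.elim x y := ⟨_, _, (Sum.elim_comp_inl_inr v).symm⟩
  simp only [star_trivial, fromBlocks_mulVec, Sum.elim_comp_inl, Sum.elim_comp_inr, zero_mulVec,
    add_zero, zero_add, sumElim_dotProduct_sumElim]
  rcases eq_or_ne x 0 with rfl | hx
  · have hy : y ≠ 0 := by rintro rfl; simp at hv
    simpa using hD.dotProduct_mulVec_pos hy
  · exact add_pos_of_pos_of_nonneg (by simpa using hA.dotProduct_mulVec_pos hx)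
      (by simpa using hD.posSemidef.dotProduct_mulVec_nonneg y)

theorem eq_zero_of_sylvester {m : Type*} [Fintype m] {A S C : Matrix m m ℝ}
    {B S' C' : Matrix n n ℝ} {X : Matrix m n ℝ}
    (hS : S.PosDef) (hC : C.PosDef) (hA : A * S + S * Aᵀ + C = 0)
    (hS' : S'.PosDef) (hC' : C'.PosDef) (hB : B * S' + S' * Bᵀ + C' = 0)
    (hX : A * X + X * Bᵀ = 0) : X = 0 := by
  have hXt : B * Xᵀ + Xᵀ * Aᵀ = 0 := by
    simpa [transpose_add, transpose_mul, add_comm] using congrArg transpose hX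
  have hΔ : fromBlocks 0 X Xᵀ 0 = 0 := by
    refine eq_zero_of_lyapunov (N := fromBlocks A 0 0 B) (hS.fromBlocks_zero hS')
      (hC.fromBlocks_zero hC') ?_ (.fromBlocks isHermitian_zero (by simp) isHermitian_zero) ?_
    · simp [fromBlocks_transpose, fromBlocks_multiply, fromBlocks_add, hA, hB]
    · simp [fromBlocks_transpose, fromBlocks_multiply, fromBlocks_add, hX, hXt]
  simpa [← fromBlocks_zero] using hΔ

end Lyapunov

variable {ι κ R : Type*} [Fintype ι] {U V : ι → Prop} [DecidablePred U] [DecidablePred V]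

theorem toBlock_mul_of_forall_not [NonUnitalNonAssocSemiring R] {M : Matrix ι ι R}
    (hU : ∀ a b, U a → ¬ U b → M a b = 0) (X : Matrix ι κ R) (q : κ → Prop) :
    (M * X).toBlock U q = M.toBlock U U * X.toBlock U q := by
  ext a c
  simp only [toBlock_apply, mul_apply]
  calc ∑ k, M a k * X k c
      = ∑ k : Subtype U, M a k * X k c + ∑ k : {k // ¬ U k}, M a k * X k c :=
        (Fintype.sum_subtype_add_sum_subtype U _).symm
    _ = ∑ k : Subtype U, M a k * X k c := by
        rw [Fintype.sum_eq_zero (fun k : {k // ¬ U k} => M a k * X k c) fun k => by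
          rw [hU _ _ a.2 k.2, zero_mul], add_zero]

theorem toBlock_lyapunov [CommRing R] {M S C : Matrix ι ι R}
    (hU : ∀ a b, U a → ¬ U b → M a b = 0) (hV : ∀ a b, V a → ¬ V b → M a b = 0)
    (hS : S.IsSymm) (h : M * S + S * Mᵀ + C = 0) :
    M.toBlock U U * S.toBlock U V + S.toBlock U V * (M.toBlock V V)ᵀ + C.toBlock U V = 0 := by
  have hST : (S.toBlock V U)ᵀ = S.toBlock U V := by
    ext a b
    exact hS.apply a b
  have hSM : (S * Mᵀ).toBlock U V = ((M * S).toBlock V U)ᵀ := by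
    ext a b
    simp [toBlock_apply, mul_apply, hS.apply, mul_comm]
  rw [← toBlock_mul_of_forall_not hU, ← hST, ← transpose_mul, ← toBlock_mul_of_forall_not hV,
    ← hSM]
  exact congrArg (·.toBlock U V) h

end Matrix

theorem InSupp.apply_eq_zero_of_reflTransGen {ι : Type*} {E : Set (ι × ι)} {M : Matrix ι ι ℝ}
    (hM : InSupp E M) {a b k : ι} (ha : Relation.ReflTransGen (fun x y => (x, y) ∈ E) a k)
    (hb : ¬ Relation.ReflTransGen (fun x y => (x, y) ∈ E) b k) : M a b = 0 :=
  hM b a fun hba => hb (ha.head hba)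

theorem no_trek_implies_zero_covariance_general {p : ℕ}
    (E : Set (Fin p × Fin p))
    (C : Matrix (Fin p) (Fin p) ℝ) (hC : C.PosDef)
    (hdiag : ∀ i j : Fin p, i ≠ j → C i j = 0)
    (i j : Fin p)
    (htrek : ¬ ∃ t : Fin p,
      Relation.ReflTransGen (fun a b : Fin p => (a, b) ∈ E) t i ∧
      Relation.ReflTransGen (fun a b : Fin p => (a, b) ∈ E) t j) :
    ∀ S ∈ LyapModel E C, S i j = 0 := by
  classical
  rintro S ⟨hS, M, hM, hLyap⟩
  let anc (k : Fin p) : Fin p → Prop := (Relation.ReflTransGen (fun a b => (a, b) ∈ E) · k)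
  have hanc k : ∀ a b, anc k a → ¬ anc k b → M a b = 0 := fun _ _ =>
    hM.apply_eq_zero_of_reflTransGen
  have hblock k l := toBlock_lyapunov (hanc k) (hanc l) (by simpa using hS.1) hLyap
  have hC_cross : C.toBlock (anc i) (anc j) = 0 := by
    rw [← IsDiag.diagonal_diag hdiag, toBlock_diagonal_disjoint]
    exact le_compl_iff_disjoint_right.mp fun t hi hj => htrek ⟨t, hi, hj⟩
  have hS_cross := eq_zero_of_sylvester (hS.submatrix Subtype.val_injective)
    (hC.submatrix Subtype.val_injective) (hblock i i) (hS.submatrix Subtype.val_injective)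
    (hC.submatrix Subtype.val_injective) (hblock j j) (by simpa [hC_cross] using hblock i j)
  exact congrFun (congrFun hS_cross ⟨i, .refl⟩) ⟨j, .refl⟩

/-- for diagonal positive definite `C`, if there is no trek between
`i` and `j` (no common node `t` with directed paths to both `i` and `j`), then
`Σ i j = 0` for every `Σ` in the model. -/
theorem no_trek_implies_zero_covariance {p : ℕ}
    (E : Set (Fin p × Fin p)) (hloops : ∀ i : Fin p, (i, i) ∈ E)
    (C : Matrix (Fin p) (Fin p) ℝ) (hC : C.PosDef)
    (hdiag : ∀ i j : Fin p, i ≠ j → C i j = 0)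
    (i j : Fin p)
    (htrek : ¬ ∃ t : Fin p,
      Relation.ReflTransGen (fun a b : Fin p => (a, b) ∈ E) t i ∧
      Relation.ReflTransGen (fun a b : Fin p => (a, b) ∈ E) t j) :
    ∀ S ∈ LyapModel E C, S i j = 0 :=
  no_trek_implies_zero_covariance_general E C hC hdiag i j htrek
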